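/- Let P = diag(1,1,0) and for a² + b² = 1 let P(t) = cos(t)·P + sin(t)·(a T₁ + b T₂), where T₁ = [[0,1,0],[1,0,0],[0,0,0]] and T₂ = [[1,0,0],[0,-1,0],[0,0,0]]. Then P(t) has rank 2 for 0 ≤ t < π/4, and P(π/4) has rank 1. -/

import Mathlib

/-!
All three matrices vanish outside the upper-left 2×2 block, so `P(t)` has the rank of its block
`[[cos t + b sin t, a sin t], [a sin t, cos t - b sin t]]`. Since `a² + b² = 1`, the block has
determinant `cos² t - sin² t = cos 2t`, positive for `0 ≤ t < π/4` and zero at `t = π/4`, and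
trace `2 cos t`, which is nonzero at `π/4`; a nonzero singular 2×2 matrix has rank 1.
-/

open Matrix

namespace Matrix

theorem rank_lt_card_of_det_eq_zero {K m : Type*} [Field K] [Fintype m] [DecidableEq m]
    {A : Matrix m m K} (h : A.det = 0) : A.rank < Fintype.card m := by
  refine (rank_le_card_width A).lt_of_ne fun hrank => ?_
  have hrows : LinearIndependent K A.row := by
    rw [linearIndependent_iff_card_eq_finrank_span, Set.finrank, ← rank_eq_finrank_span_row,
      hrank]
  rw [linearIndependent_rows_iff_isUnit, isUnit_iff_isUnit_det, h] at hrows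
  exact not_isUnit_zero hrows

theorem rank_pos_of_ne_zero {K m n : Type*} [Field K] [Fintype n] {A : Matrix m n K}
    (h : A ≠ 0) : 0 < A.rank := by
  classical
  rw [rank, pos_iff_ne_zero, Ne, Submodule.finrank_eq_zero, LinearMap.range_eq_bot]
  rwa [← Matrix.toLin'_apply', LinearEquiv.map_eq_zero_iff]

theorem rank_mul_mul_of_mul_eq_one {R m n k l : Type*} [CommRing R] [StrongRankCondition R]
    [Fintype m] [Fintype n] [Fintype k] [Fintype l] [DecidableEq k] [DecidableEq l]
    {E : Matrix m k R} {L : Matrix k m R} {F : Matrix l n R} {G : Matrix n l R}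
    (hE : L * E = 1) (hF : F * G = 1) (M : Matrix k l R) : (E * M * F).rank = M.rank := by
  refine le_antisymm ((rank_mul_le_left _ _).trans (rank_mul_le_right _ _)) ?_
  calc M.rank = (L * (E * M * F) * G).rank := by
        rw [Matrix.mul_assoc, Matrix.mul_assoc, hF, Matrix.mul_one, ← Matrix.mul_assoc, hE,
          Matrix.one_mul]
    _ ≤ (E * M * F).rank := (rank_mul_le_left _ _).trans (rank_mul_le_right _ _)

end Matrix

open Real

noncomputable def geodesicBlock (a b t : ℝ) : Matrix (Fin 2) (Fin 2) ℝ :=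
  !![cos t + b * sin t, a * sin t; a * sin t, cos t - b * sin t]

def planeInclusion : Matrix (Fin 3) (Fin 2) ℝ := !![1, 0; 0, 1; 0, 0]

theorem planeInclusion_transpose_mul : planeInclusionᵀ * planeInclusion = 1 := by
  ext i j
  fin_cases i <;> fin_cases j <;> simp [planeInclusion, Matrix.mul_apply, Fin.sum_univ_succ]

theorem geodesic_eq_planeInclusion_mul_geodesicBlock (a b t : ℝ) :
    cos t • (!![1,0,0; 0,1,0; 0,0,0] : Matrix (Fin 3) (Fin 3) ℝ) +
        sin t • (a • (!![0,1,0; 1,0,0; 0,0,0] : Matrix (Fin 3) (Fin 3) ℝ) +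
          b • (!![1,0,0; 0,-1,0; 0,0,0] : Matrix (Fin 3) (Fin 3) ℝ)) =
      planeInclusion * geodesicBlock a b t * planeInclusionᵀ := by
  ext i j
  fin_cases i <;> fin_cases j <;>
    simp [planeInclusion, geodesicBlock, Matrix.mul_apply, Fin.sum_univ_succ] <;> ring

theorem det_geodesicBlock {a b : ℝ} (hab : a ^ 2 + b ^ 2 = 1) (t : ℝ) :
    (geodesicBlock a b t).det = cos (2 * t) := by
  rw [geodesicBlock, det_fin_two_of, cos_two_mul']
  linear_combination -(sin t ^ 2) * hab

theorem trace_geodesicBlock (a b t : ℝ) : (geodesicBlock a b t).trace = 2 * cos t := by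
  rw [geodesicBlock, trace_fin_two_of]; ring

theorem geodesicBlock_ne_zero (a b : ℝ) {t : ℝ} (ht : cos t ≠ 0) :
    geodesicBlock a b t ≠ 0 := by
  intro h
  have htrace := trace_geodesicBlock a b t
  rw [h, trace_zero] at htrace
  exact ht (by linarith)

/-- For P = diag(1,1,0), T₁ = [[0,1,0],[1,0,0],[0,0,0]], T₂ = [[1,0,0],[0,-1,0],[0,0,0]]
and a² + b² = 1, the matrix P(t) = cos t · P + sin t · (a T₁ + b T₂) has rank 2 for
0 ≤ t < π/4, and P(π/4) has rank 1. -/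
theorem rank_along_normal_geodesic (a b : ℝ) (hab : a ^ 2 + b ^ 2 = 1) :
    (∀ t : ℝ, 0 ≤ t → t < Real.pi / 4 →
      (Real.cos t • (!![1,0,0; 0,1,0; 0,0,0] : Matrix (Fin 3) (Fin 3) ℝ) +
        Real.sin t • (a • (!![0,1,0; 1,0,0; 0,0,0] : Matrix (Fin 3) (Fin 3) ℝ) +
          b • (!![1,0,0; 0,-1,0; 0,0,0] : Matrix (Fin 3) (Fin 3) ℝ))).rank = 2) ∧
    (Real.cos (Real.pi / 4) • (!![1,0,0; 0,1,0; 0,0,0] : Matrix (Fin 3) (Fin 3) ℝ) +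
      Real.sin (Real.pi / 4) • (a • (!![0,1,0; 1,0,0; 0,0,0] : Matrix (Fin 3) (Fin 3) ℝ) +
        b • (!![1,0,0; 0,-1,0; 0,0,0] : Matrix (Fin 3) (Fin 3) ℝ))).rank = 1 := by
  simp_rw [geodesic_eq_planeInclusion_mul_geodesicBlock,
    rank_mul_mul_of_mul_eq_one planeInclusion_transpose_mul planeInclusion_transpose_mul]
  refine ⟨fun t ht₀ ht => ?_, ?_⟩
  · have hdet : (geodesicBlock a b t).det ≠ 0 := by
      rw [det_geodesicBlock hab]
      exact (cos_pos_of_mem_Ioo ⟨by linarith [pi_pos], by linarith⟩).ne'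
    rw [rank_of_det_ne_zero hdet, Fintype.card_fin]
  · have hdet : (geodesicBlock a b (π / 4)).det = 0 := by
      rw [det_geodesicBlock hab, show 2 * (π / 4) = π / 2 by ring, cos_pi_div_two]
    have hne : geodesicBlock a b (π / 4) ≠ 0 :=
      geodesicBlock_ne_zero a b (by rw [cos_pi_div_four]; positivity)
    have hlt : (geodesicBlock a b (π / 4)).rank < 2 := by
      simpa using rank_lt_card_of_det_eq_zero hdet
    have hpos := rank_pos_of_ne_zero hne
    omega
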